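/- Tensorization of chi-squared divergence: for probability measures ρ_i, σ_i (i = 1,…,n) on measurable spaces Y_i with ρ_i ≪ σ_i, one has 1 + χ²(⊗ρ_i ∥ ⊗σ_i) = ∏_{i=1}^n (1 + χ²(ρ_i ∥ σ_i)). -/

import Mathlib

/-! The density of `⊗ ρᵢ` with respect to `⊗ σᵢ` is `x ↦ ∏ dρᵢ/dσᵢ (xᵢ)`, as both measures agree
on boxes. Its square is again a product of functions of separate coordinates, whose integral
against `⊗ σᵢ` factorizes. Finally `1 + χ²(ρ ∥ σ) = ∫ (dρ/dσ)² dσ` despite the truncated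
subtraction in `ℝ≥0∞`, because `∫ (dρ/dσ)² dσ ≥ 2 ∫ dρ/dσ dσ - 1 = 1`. -/

open MeasureTheory ENNReal

noncomputable def chi2ENN {Y : Type*} [MeasurableSpace Y] (ρ σ : Measure Y) : ℝ≥0∞ :=
  (∫⁻ y, (ρ.rnDeriv σ y) ^ 2 ∂σ) - 1

open ProbabilityTheory

section Pi

variable {ι : Type*} [Fintype ι] {Y : ι → Type*} [∀ i, MeasurableSpace (Y i)]
  (ρ σ : ∀ i, Measure (Y i)) [∀ i, SigmaFinite (ρ i)] [∀ i, IsProbabilityMeasure (σ i)]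

/-- Coordinates are independent under a product of probability measures. -/
lemma lintegral_pi_prod_eq_prod_lintegral {f : ∀ i, Y i → ℝ≥0∞} (hf : ∀ i, Measurable (f i)) :
    ∫⁻ x, ∏ i, f i (x i) ∂Measure.pi σ = ∏ i, ∫⁻ y, f i y ∂σ i := by
  refine (lintegral_prod_eq_prod_lintegral_of_indepFun Finset.univ
    (fun i (x : ∀ i, Y i) => f i (x i)) (iIndepFun_pi fun i => (hf i).aemeasurable)
    fun i => (hf i).comp (measurable_pi_apply i)).trans ?_
  exact Finset.prod_congr rfl fun i _ => (measurePreserving_eval σ i).lintegral_comp (hf i)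

variable {ρ σ}

lemma Measure.pi_eq_withDensity_prod_rnDeriv (hac : ∀ i, ρ i ≪ σ i) :
    Measure.pi ρ = (Measure.pi σ).withDensity fun x => ∏ i, (ρ i).rnDeriv (σ i) (x i) := by
  refine Measure.pi_eq fun s hs => ?_
  have hbox : (Set.univ.pi s).indicator (fun x => ∏ i, (ρ i).rnDeriv (σ i) (x i))
      = fun x => ∏ i, (s i).indicator ((ρ i).rnDeriv (σ i)) (x i) := by
    ext x
    classical
    simp only [Set.indicator_apply, Set.mem_univ_pi, Finset.prod_ite_zero, Finset.mem_univ,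
      forall_const]
  rw [withDensity_apply _ (MeasurableSet.univ_pi hs), ← lintegral_indicator (.univ_pi hs), hbox,
    lintegral_pi_prod_eq_prod_lintegral σ
      fun i => (Measure.measurable_rnDeriv _ _).indicator (hs i)]
  refine Finset.prod_congr rfl fun i _ => ?_
  rw [lintegral_indicator (hs i), Measure.setLIntegral_rnDeriv (hac i)]

lemma Measure.rnDeriv_pi_ae_eq_prod (hac : ∀ i, ρ i ≪ σ i) :
    (Measure.pi ρ).rnDeriv (Measure.pi σ)
      =ᵐ[Measure.pi σ] fun x => ∏ i, (ρ i).rnDeriv (σ i) (x i) := by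
  rw [Measure.pi_eq_withDensity_prod_rnDeriv hac]
  exact Measure.rnDeriv_withDensity _ <| Finset.measurable_prod _
    fun i _ => (Measure.measurable_rnDeriv _ _).comp (measurable_pi_apply i)

lemma lintegral_rnDeriv_pi_pow (hac : ∀ i, ρ i ≪ σ i) (k : ℕ) :
    ∫⁻ x, (Measure.pi ρ).rnDeriv (Measure.pi σ) x ^ k ∂Measure.pi σ
      = ∏ i, ∫⁻ y, (ρ i).rnDeriv (σ i) y ^ k ∂σ i := by
  rw [lintegral_congr_ae <| (Measure.rnDeriv_pi_ae_eq_prod hac).mono fun x hx => by rw [hx]]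
  simp_rw [← Finset.prod_pow]
  exact lintegral_pi_prod_eq_prod_lintegral σ fun i => (Measure.measurable_rnDeriv _ _).pow_const k

end Pi

lemma ENNReal.two_mul_le_sq_add_one (a : ℝ≥0∞) : 2 * a ≤ a ^ 2 + 1 := by
  induction a using ENNReal.recTopCoe with
  | top => simp
  | coe a => simpa using (ENNReal.coe_le_coe.2 (two_mul_le_add_sq a 1))

lemma one_le_lintegral_rnDeriv_sq {Y : Type*} [MeasurableSpace Y] {ρ σ : Measure Y}
    [IsProbabilityMeasure ρ] [IsProbabilityMeasure σ] (hac : ρ ≪ σ) :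
    1 ≤ ∫⁻ y, ρ.rnDeriv σ y ^ 2 ∂σ := by
  have hmass : ∫⁻ y, ρ.rnDeriv σ y ∂σ = 1 := by
    rw [Measure.lintegral_rnDeriv hac, measure_univ]
  have h : 1 + 1 ≤ ∫⁻ y, ρ.rnDeriv σ y ^ 2 ∂σ + 1 :=
    calc 1 + 1 = ∫⁻ y, 2 * ρ.rnDeriv σ y ∂σ := by
          rw [lintegral_const_mul _ (Measure.measurable_rnDeriv ρ σ), hmass, mul_one,
            one_add_one_eq_two]
      _ ≤ ∫⁻ y, ρ.rnDeriv σ y ^ 2 + 1 ∂σ :=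
          lintegral_mono fun y => ENNReal.two_mul_le_sq_add_one _
      _ = ∫⁻ y, ρ.rnDeriv σ y ^ 2 ∂σ + 1 := by
          rw [lintegral_add_right _ measurable_const, lintegral_const, measure_univ, mul_one]
  exact (ENNReal.add_le_add_iff_right one_ne_top).mp h

lemma one_add_chi2ENN {Y : Type*} [MeasurableSpace Y] {ρ σ : Measure Y}
    [IsProbabilityMeasure ρ] [IsProbabilityMeasure σ] (hac : ρ ≪ σ) :
    1 + chi2ENN ρ σ = ∫⁻ y, ρ.rnDeriv σ y ^ 2 ∂σ :=
  add_tsub_cancel_of_le (one_le_lintegral_rnDeriv_sq hac)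

theorem chi_sq_tensorization (n : ℕ) (Y : Fin n → Type*)
    [∀ i, MeasurableSpace (Y i)]
    (ρ σ : ∀ i, Measure (Y i))
    [∀ i, IsProbabilityMeasure (ρ i)] [∀ i, IsProbabilityMeasure (σ i)]
    (hac : ∀ i, ρ i ≪ σ i) :
    1 + chi2ENN (Measure.pi ρ) (Measure.pi σ)
      = ∏ i : Fin n, (1 + chi2ENN (ρ i) (σ i)) := by
  have hac_pi : Measure.pi ρ ≪ Measure.pi σ :=
    Measure.pi_eq_withDensity_prod_rnDeriv hac ▸ withDensity_absolutelyContinuous _ _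
  rw [one_add_chi2ENN hac_pi, lintegral_rnDeriv_pi_pow hac]
  exact Finset.prod_congr rfl fun i _ => (one_add_chi2ENN (hac i)).symm
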